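/- Let p = (p_1, ..., p_n) be a probability distribution with all components strictly positive, and for j = 1,...,n let s_j = Σ_{k=1}^{j} p_k (with s_0 = 0). For 1 ≤ i ≤ j ≤ n, define hq[i,j] as the maximum of the entropy-like sum H̃(q) = −Σ_{t=1}^{i} q_t log₂ q_t over all contiguous i-aggregations q = (q_1,...,q_i) of (p_1,...,p_j). Then hq satisfies: hq[1,j] = −s_j·log₂ s_j for all j ≥ 1, and for i > 1 and j ≥ i, hq[i,j] = max_{k = i,...,j} { hq[i−1, k−1] − (s_j − s_{k−1})·log₂(s_j − s_{k−1}) }. -/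

import Mathlib

/-- `q` (given by its first `i` values) is a contiguous `i`-aggregation of the first
`j` values of `p`. -/
def IsContigAgg (j i : ℕ) (p q : ℕ → ℝ) : Prop :=
  ∃ ind : ℕ → ℕ, ind 0 = 0 ∧ ind i = j ∧ (∀ t < i, ind t < ind (t + 1)) ∧
    ∀ t < i, q t = ∑ k ∈ Finset.Ico (ind t) (ind (t + 1)), p k

/-- Entropy-like sum (in bits) of the first `i` components of `w`. -/
noncomputable def shannonHm (i : ℕ) (w : ℕ → ℝ) : ℝ :=
  -∑ t ∈ Finset.range i, w t * Real.logb 2 (w t)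

/-!
An optimal aggregation into `i` blocks splits as an aggregation of a prefix `p_1, …, p_l`
into `i - 1` blocks followed by the single last block `p_{l+1} + ⋯ + p_j`; conversely every
such pair glues to an aggregation into `i` blocks. Since the entropy-like sum is additive
over blocks, maximising over the aggregations of `p_1, …, p_j` amounts to maximising over
the cut point `l` the optimum for the prefix minus the last block's term.
-/

open Finset

lemma shannonHm_succ (m : ℕ) (w : ℕ → ℝ) :
    shannonHm (m + 1) w = shannonHm m w - w m * Real.logb 2 (w m) := by
  simp only [shannonHm, sum_range_succ]; ring

lemma shannonHm_congr {i : ℕ} {w w' : ℕ → ℝ} (h : ∀ t < i, w t = w' t) :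
    shannonHm i w = shannonHm i w' := by
  simp only [shannonHm]
  congr 1
  exact sum_congr rfl fun t ht => by rw [h t (mem_range.mp ht)]

lemma shannonHm_succ_update (m : ℕ) (w : ℕ → ℝ) (x : ℝ) :
    shannonHm (m + 1) (Function.update w m x) = shannonHm m w - x * Real.logb 2 x := by
  rw [shannonHm_succ, Function.update_self,
    shannonHm_congr fun t ht => Function.update_of_ne ht.ne x w]

namespace IsContigAgg

variable {j i l m : ℕ} {p q : ℕ → ℝ}

lemma apply_zero_eq_sum_range (h : IsContigAgg j 1 p q) : q 0 = ∑ k ∈ range j, p k := by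
  obtain ⟨ind, h0, h1, -, hval⟩ := h
  rw [hval 0 one_pos, h0, zero_add, h1, range_eq_Ico]

lemma exists_init (h : IsContigAgg j (m + 1) p q) :
    ∃ l, m ≤ l ∧ l < j ∧ IsContigAgg l m p q ∧ q m = ∑ k ∈ Ico l j, p k := by
  obtain ⟨ind, h0, hlast, hmono, hval⟩ := h
  have hge : ∀ t ≤ m + 1, t ≤ ind t := by
    intro t ht
    induction t with
    | zero => omega
    | succ t ih => have := hmono t (by omega); have := ih (by omega); omega
  refine ⟨ind m, hge m (by omega), hlast ▸ hmono m (by omega),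
    ⟨ind, h0, rfl, fun t ht => hmono t (by omega), fun t ht => hval t (by omega)⟩, ?_⟩
  rw [hval m (by omega), hlast]

lemma snoc (h : IsContigAgg l m p q) (hlj : l < j) :
    IsContigAgg j (m + 1) p (Function.update q m (∑ k ∈ Ico l j, p k)) := by
  obtain ⟨ind, h0, hlast, hmono, hval⟩ := h
  have hind : ∀ t ≤ m, Function.update ind (m + 1) j t = ind t := fun t ht =>
    Function.update_of_ne (by omega) _ _
  refine ⟨Function.update ind (m + 1) j, by rw [hind 0 (by omega), h0],
    Function.update_self .., fun t ht => ?_, fun t ht => ?_⟩ <;>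
  rcases Nat.lt_succ_iff_lt_or_eq.mp ht with ht | rfl
  · rw [hind t (by omega), hind (t + 1) ht]; exact hmono t ht
  · rw [hind t le_rfl, Function.update_self, hlast]; exact hlj
  · rw [hind t (by omega), hind (t + 1) ht, Function.update_of_ne ht.ne]; exact hval t ht
  · rw [hind t le_rfl, Function.update_self, Function.update_self, hlast]

end IsContigAgg

theorem dp_recurrence_general
    (n : ℕ) (p : ℕ → ℝ)
    (s : ℕ → ℝ) (hs : ∀ j, s j = ∑ k ∈ Finset.range j, p k)
    (hq : ℕ → ℕ → ℝ)
    (hhq : ∀ i j, 1 ≤ i → i ≤ j → j ≤ n →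
      IsGreatest {x : ℝ | ∃ q : ℕ → ℝ, IsContigAgg j i p q ∧ x = shannonHm i q}
        (hq i j)) :
    (∀ j, 1 ≤ j → j ≤ n → hq 1 j = -(s j * Real.logb 2 (s j))) ∧
    (∀ i j, 1 < i → ∀ (hij : i ≤ j), j ≤ n →
      hq i j = (Finset.Icc i j).sup' (Finset.nonempty_Icc.mpr hij)
        (fun k => hq (i - 1) (k - 1)
          - (s j - s (k - 1)) * Real.logb 2 (s j - s (k - 1)))) := by
  have hblock : ∀ l j, l ≤ j → ∑ k ∈ Ico l j, p k = s j - s l := fun l j hlj => by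
    rw [hs, hs, sum_Ico_eq_sub _ hlj]
  refine ⟨fun j h1j hjn => ?_, fun i j hi hij hjn => ?_⟩
  · obtain ⟨q, hagg, hx⟩ := (hhq 1 j le_rfl h1j hjn).1
    rw [hx, shannonHm, sum_range_one, hagg.apply_zero_eq_sum_range, hs]
  obtain ⟨m, rfl⟩ : ∃ m, i = m + 1 := ⟨i - 1, by omega⟩
  simp only [Nat.add_sub_cancel]
  refine le_antisymm ?_ (sup'_le _ _ fun k hk => ?_)
  · obtain ⟨q, hagg, hx⟩ := (hhq (m + 1) j (by omega) hij hjn).1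
    obtain ⟨l, hml, hlj, hinit, hqm⟩ := hagg.exists_init
    rw [hblock l j hlj.le] at hqm
    calc hq (m + 1) j = shannonHm m q - (s j - s l) * Real.logb 2 (s j - s l) := by
          rw [hx, shannonHm_succ, hqm]
      _ ≤ hq m l - (s j - s l) * Real.logb 2 (s j - s l) := by
          gcongr; exact (hhq m l (by omega) hml (by omega)).2 ⟨q, hinit, rfl⟩
      _ ≤ _ := le_sup'_of_le _ (b := l + 1) (mem_Icc.mpr ⟨by omega, hlj⟩) le_rfl
  · obtain ⟨hmk, hkj⟩ := mem_Icc.mp hk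
    obtain ⟨q, hagg, hx⟩ := (hhq m (k - 1) (by omega) (by omega) (by omega)).1
    have hglued := (hhq (m + 1) j (by omega) hij hjn).2 ⟨_, hagg.snoc (j := j) (by omega), rfl⟩
    rwa [shannonHm_succ_update, hblock _ _ (by omega), ← hx] at hglued

/-- The table `hq[i,j]` of maximum entropy-like sums of contiguous
`i`-aggregations of `(p_1, …, p_j)` satisfies the dynamic-programming recurrence. -/
theorem dp_recurrence
    (n : ℕ) (p : ℕ → ℝ) (hp : ∀ k < n, 0 < p k)
    (hsum : ∑ k ∈ Finset.range n, p k = 1)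
    (s : ℕ → ℝ) (hs : ∀ j, s j = ∑ k ∈ Finset.range j, p k)
    (hq : ℕ → ℕ → ℝ)
    (hhq : ∀ i j, 1 ≤ i → i ≤ j → j ≤ n →
      IsGreatest {x : ℝ | ∃ q : ℕ → ℝ, IsContigAgg j i p q ∧ x = shannonHm i q}
        (hq i j)) :
    (∀ j, 1 ≤ j → j ≤ n → hq 1 j = -(s j * Real.logb 2 (s j))) ∧
    (∀ i j, 1 < i → ∀ (hij : i ≤ j), j ≤ n →
      hq i j = (Finset.Icc i j).sup' (Finset.nonempty_Icc.mpr hij)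
        (fun k => hq (i - 1) (k - 1)
          - (s j - s (k - 1)) * Real.logb 2 (s j - s (k - 1)))) :=
  dp_recurrence_general n p s hs hq hhq
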